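/- arXiv:1809.06433 — 4 statements merged into one kernel-verified Lean document; each statement's English description precedes it below -/
import Mathlib

section
/- In the graph G̃ = G̃(X,Y), every vertex left unmatched by a maximal matching is a diagonal vertex: if x ⊆ E is a maximal matching of G̃ and a vertex w of G̃ is adjacent to no edge of x, then w = Δ_z for some z ∈ X ∪ Y. Equivalently, every maximal matching of G̃ matches every vertex of X ∪ Y. -/
open Finset

/-- Points of the plane `ℝ²`. -/
abbrev Pt : Type := ℝ × ℝ

/-- Vertices of the bipartite graph `G̃(X,Y)`: `Sum.inl z` represents the off-diagonal
point `z`, and `Sum.inr z` represents the diagonal vertex `Δ_z`, tagged by its source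
point `z` (so distinct points give distinct diagonal vertices, as in `U = X ⊔ Δ_Y`,
`V = Y ⊔ Δ_X`). -/
abbrev Vtx : Type := Pt ⊕ Pt

/-- Diagonal projection `Δ_z = ((c+d)/2, (c+d)/2)` for `z = (c,d)`. -/
noncomputable def diagProj (z : Pt) : Pt := ((z.1 + z.2) / 2, (z.1 + z.2) / 2)

/-- The point of `ℝ²` represented by a vertex. -/
noncomputable def pos : Vtx → Pt
  | Sum.inl z => z
  | Sum.inr z => diagProj z

/-- The edge set `E` of `G̃(X,Y)`: all pairs `(a, b)` with `a ∈ X`, `b ∈ Y`, together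
with the pendant edges `(a, Δ_a)` for `a ∈ X` and `(Δ_b, b)` for `b ∈ Y`.  First
components are vertices of `U = X ⊔ Δ_Y`, second components vertices of `V = Y ⊔ Δ_X`. -/
noncomputable def edges (X Y : Finset Pt) : Finset (Vtx × Vtx) :=
  ((X ×ˢ Y).image fun ab => ((Sum.inl ab.1, Sum.inl ab.2) : Vtx × Vtx)) ∪
    (X.image fun a => ((Sum.inl a, Sum.inr a) : Vtx × Vtx)) ∪
    (Y.image fun b => ((Sum.inr b, Sum.inl b) : Vtx × Vtx))

/-- A matching: each (left or right) vertex is adjacent to at most one edge of `x`. -/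
def IsMatching (x : Finset (Vtx × Vtx)) : Prop :=
  ∀ e ∈ x, ∀ e' ∈ x, e ≠ e' → e.1 ≠ e'.1 ∧ e.2 ≠ e'.2

/-- A maximal matching among the subsets of the edge set `E`: a matching not properly
contained in another matching. -/
def IsMaximalMatching (E x : Finset (Vtx × Vtx)) : Prop :=
  x ⊆ E ∧ IsMatching x ∧ ∀ y, y ⊆ E → IsMatching y → x ⊆ y → x = y

/-- The `ℓ_q` norm of a vector of `ℝ²`. -/
noncomputable def lqNorm (q : ℝ) (z : Pt) : ℝ := (|z.1| ^ q + |z.2| ^ q) ^ (1 / q)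

/-- The edge weight `ω(u,v) = ‖u − v‖_q^p`. -/
noncomputable def edgeWeight (p q : ℝ) (u v : Vtx) : ℝ := lqNorm q (pos u - pos v) ^ p

/-- The cost of a matching, `C(x) = Σ_{e ∈ x} ω(e)`. -/
noncomputable def cost (p q : ℝ) (x : Finset (Vtx × Vtx)) : ℝ :=
  ∑ e ∈ x, edgeWeight p q e.1 e.2

/-- `F_c(x) = Σ_{(u,v) ∈ E} ω(u,v) · x_{u,v}`, identifying a subset `x ⊆ E` with its
indicator vector in `{0,1}^E`. -/
noncomputable def Fc (p q : ℝ) (E x : Finset (Vtx × Vtx)) : ℝ :=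
  ∑ e ∈ E, edgeWeight p q e.1 e.2 * (if e ∈ x then 1 else 0)

/-- `F_U(x) = B · Σ_{u ∈ X} (1 − Σ_{v : (u,v) ∈ E} x_{u,v})²`. -/
noncomputable def FU (B : ℝ) (X : Finset Pt) (E x : Finset (Vtx × Vtx)) : ℝ :=
  B * ∑ u ∈ X,
    (1 - ∑ e ∈ E.filter (fun e => e.1 = Sum.inl u), (if e ∈ x then (1 : ℝ) else 0)) ^ 2

/-- `F_V(x) = B · Σ_{v ∈ Y} (1 − Σ_{u : (u,v) ∈ E} x_{u,v})²`. -/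
noncomputable def FV (B : ℝ) (Y : Finset Pt) (E x : Finset (Vtx × Vtx)) : ℝ :=
  B * ∑ v ∈ Y,
    (1 - ∑ e ∈ E.filter (fun e => e.2 = Sum.inl v), (if e ∈ x then (1 : ℝ) else 0)) ^ 2

/-- The QUBO Hamiltonian `H = F_c + F_U + F_V` for the graph `G̃(X,Y)`. -/
noncomputable def Ham (B p q : ℝ) (X Y : Finset Pt) (x : Finset (Vtx × Vtx)) : ℝ :=
  Fc p q (edges X Y) x + FU B X (edges X Y) x + FV B Y (edges X Y) x


lemma mem_edges_iff {X Y : Finset Pt} {e : Vtx × Vtx} :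
    e ∈ edges X Y ↔ (∃ a ∈ X, ∃ b ∈ Y, e = (Sum.inl a, Sum.inl b)) ∨
      (∃ a ∈ X, e = (Sum.inl a, Sum.inr a)) ∨ (∃ b ∈ Y, e = (Sum.inr b, Sum.inl b)) := by
  simp only [edges, Finset.mem_union, Finset.mem_image, Finset.mem_product]
  constructor
  · rintro ((⟨ab, hab, rfl⟩ | ⟨a, ha, rfl⟩) | ⟨b, hb, rfl⟩)
    · exact Or.inl ⟨ab.1, hab.1, ab.2, hab.2, rfl⟩
    · exact Or.inr (Or.inl ⟨a, ha, rfl⟩)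
    · exact Or.inr (Or.inr ⟨b, hb, rfl⟩)
  · rintro (⟨a, ha, b, hb, rfl⟩ | ⟨a, ha, rfl⟩ | ⟨b, hb, rfl⟩)
    · exact Or.inl (Or.inl ⟨(a, b), ⟨ha, hb⟩, rfl⟩)
    · exact Or.inl (Or.inr ⟨a, ha, rfl⟩)
    · exact Or.inr ⟨b, hb, rfl⟩

lemma snd_inr_eq {X Y : Finset Pt} {e : Vtx × Vtx} {a : Pt}
    (he : e ∈ edges X Y) (h2 : e.2 = Sum.inr a) : e = (Sum.inl a, Sum.inr a) := by
  rcases mem_edges_iff.1 he with ⟨a', _, b, _, rfl⟩ | ⟨a', _, rfl⟩ | ⟨b, _, rfl⟩ <;>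
    simp_all

lemma fst_inr_eq {X Y : Finset Pt} {e : Vtx × Vtx} {b : Pt}
    (he : e ∈ edges X Y) (h1 : e.1 = Sum.inr b) : e = (Sum.inr b, Sum.inl b) := by
  rcases mem_edges_iff.1 he with ⟨a', _, b', _, rfl⟩ | ⟨a', _, rfl⟩ | ⟨b', _, rfl⟩ <;>
    simp_all

lemma matched_left {X Y : Finset Pt} {x : Finset (Vtx × Vtx)}
    (hx : IsMaximalMatching (edges X Y) x) {a : Pt} (ha : a ∈ X) :
    ∃ e ∈ x, e.1 = Sum.inl a := by
  by_contra h
  push_neg at h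
  set e0 : Vtx × Vtx := (Sum.inl a, Sum.inr a) with he0
  have he0E : e0 ∈ edges X Y := mem_edges_iff.2 (Or.inr (Or.inl ⟨a, ha, rfl⟩))
  have he0x : e0 ∉ x := fun hm => h e0 hm rfl
  have hmatch : IsMatching (insert e0 x) := by
    intro e he e' he' hne
    simp only [Finset.mem_insert] at he he'
    rcases he with rfl | he
    · rcases he' with rfl | he'
      · exact absurd rfl hne
      · refine ⟨fun heq => h e' he' heq.symm, fun heq => ?_⟩
        have := snd_inr_eq (hx.1 he') heq.symm
        exact h e' he' (by rw [this])
    · rcases he' with rfl | he'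
      · refine ⟨fun heq => h e he heq, fun heq => ?_⟩
        have := snd_inr_eq (hx.1 he) heq
        exact h e he (by rw [this])
      · exact hx.2.1 e he e' he' hne
  have hsub : insert e0 x ⊆ edges X Y := by
    intro e he
    rcases Finset.mem_insert.1 he with rfl | he
    · exact he0E
    · exact hx.1 he
  have := hx.2.2 _ hsub hmatch (Finset.subset_insert _ _)
  exact he0x (this ▸ Finset.mem_insert_self e0 x)

lemma matched_right {X Y : Finset Pt} {x : Finset (Vtx × Vtx)}
    (hx : IsMaximalMatching (edges X Y) x) {b : Pt} (hb : b ∈ Y) :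
    ∃ e ∈ x, e.2 = Sum.inl b := by
  by_contra h
  push_neg at h
  set e0 : Vtx × Vtx := (Sum.inr b, Sum.inl b) with he0
  have he0E : e0 ∈ edges X Y := mem_edges_iff.2 (Or.inr (Or.inr ⟨b, hb, rfl⟩))
  have he0x : e0 ∉ x := fun hm => h e0 hm rfl
  have hmatch : IsMatching (insert e0 x) := by
    intro e he e' he' hne
    simp only [Finset.mem_insert] at he he'
    rcases he with rfl | he
    · rcases he' with rfl | he'
      · exact absurd rfl hne
      · refine ⟨fun heq => ?_, fun heq => h e' he' heq.symm⟩
        have := fst_inr_eq (hx.1 he') heq.symm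
        exact h e' he' (by rw [this])
    · rcases he' with rfl | he'
      · refine ⟨fun heq => ?_, fun heq => h e he heq⟩
        have := fst_inr_eq (hx.1 he) heq
        exact h e he (by rw [this])
      · exact hx.2.1 e he e' he' hne
  have hsub : insert e0 x ⊆ edges X Y := by
    intro e he
    rcases Finset.mem_insert.1 he with rfl | he
    · exact he0E
    · exact hx.1 he
  have := hx.2.2 _ hsub hmatch (Finset.subset_insert _ _)
  exact he0x (this ▸ Finset.mem_insert_self e0 x)

/-- In `G̃ = G̃(X,Y)`, every vertex left unmatched by a maximal
matching is a diagonal vertex: if `x ⊆ E` is a maximal matching of `G̃` and a vertex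
`w` of `G̃` (in either part `U = X ⊔ Δ_Y` or `V = Y ⊔ Δ_X`) is adjacent to no edge of
`x`, then `w = Δ_z` for some `z ∈ X ∪ Y`. -/
theorem unmatched_vertex_is_diagonal
    (X Y : Finset Pt) (hX : ∀ z ∈ X, z.1 < z.2) (hY : ∀ z ∈ Y, z.1 < z.2)
    (x : Finset (Vtx × Vtx)) (hx : IsMaximalMatching (edges X Y) x) :
    (∀ w ∈ X.image (Sum.inl : Pt → Vtx) ∪ Y.image (Sum.inr : Pt → Vtx),
        (∀ e ∈ x, e.1 ≠ w) → ∃ z ∈ X ∪ Y, w = Sum.inr z) ∧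
    (∀ w ∈ Y.image (Sum.inl : Pt → Vtx) ∪ X.image (Sum.inr : Pt → Vtx),
        (∀ e ∈ x, e.2 ≠ w) → ∃ z ∈ X ∪ Y, w = Sum.inr z) := by
  constructor
  · intro w hw hun
    rcases Finset.mem_union.1 hw with hw | hw
    · obtain ⟨a, ha, rfl⟩ := Finset.mem_image.1 hw
      obtain ⟨e, he, h1⟩ := matched_left hx ha
      exact absurd h1 (hun e he)
    · obtain ⟨b, hb, rfl⟩ := Finset.mem_image.1 hw
      exact ⟨b, Finset.mem_union.2 (Or.inr hb), rfl⟩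
  · intro w hw hun
    rcases Finset.mem_union.1 hw with hw | hw
    · obtain ⟨b, hb, rfl⟩ := Finset.mem_image.1 hw
      obtain ⟨e, he, h2⟩ := matched_right hx hb
      exact absurd h2 (hun e he)
    · obtain ⟨a, ha, rfl⟩ := Finset.mem_image.1 hw
      exact ⟨a, Finset.mem_union.2 (Or.inl ha), rfl⟩
end

section
/- Assume the genericity condition and B > B*. If x ⊆ E is not a matching of G̃, and x̃ is obtained from x by removing a single edge (u,v) ∈ x that shares a vertex with at least one other edge of x, then H(x̃) < H(x). -/
open Finset

lemma edge_cases {X Y : Finset Pt} {e : Vtx × Vtx} (he : e ∈ edges X Y) :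
    (∃ a ∈ X, ∃ b ∈ Y, e = (Sum.inl a, Sum.inl b)) ∨ (∃ a ∈ X, e = (Sum.inl a, Sum.inr a)) ∨
    (∃ b ∈ Y, e = (Sum.inr b, Sum.inl b)) := by
  simp only [edges, Finset.mem_union, Finset.mem_image, Finset.mem_product] at he
  rcases he with (⟨⟨a,b⟩, ⟨ha, hb⟩, rfl⟩ | ⟨a, ha, rfl⟩) | ⟨b, hb, rfl⟩
  exacts [Or.inl ⟨a, ha, b, hb, rfl⟩, Or.inr (Or.inl ⟨a, ha, rfl⟩), Or.inr (Or.inr ⟨b, hb, rfl⟩)]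

lemma edge_fst_inr {X Y : Finset Pt} {b : Pt} {e : Vtx × Vtx} (he : e ∈ edges X Y)
    (h : e.1 = Sum.inr b) : e = (Sum.inr b, Sum.inl b) := by
  rcases edge_cases he with ⟨a, _, c, _, rfl⟩ | ⟨a, _, rfl⟩ | ⟨c, _, rfl⟩ <;>
    simp_all

lemma edge_snd_inr {X Y : Finset Pt} {a : Pt} {e : Vtx × Vtx} (he : e ∈ edges X Y)
    (h : e.2 = Sum.inr a) : e = (Sum.inl a, Sum.inr a) := by
  rcases edge_cases he with ⟨c, _, d, _, rfl⟩ | ⟨c, _, rfl⟩ | ⟨d, _, rfl⟩ <;>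
    simp_all

lemma edge_fst_inl_mem {X Y : Finset Pt} {a : Pt} {e : Vtx × Vtx} (he : e ∈ edges X Y)
    (h : e.1 = Sum.inl a) : a ∈ X := by
  rcases edge_cases he with ⟨c, hc, d, _, rfl⟩ | ⟨c, hc, rfl⟩ | ⟨d, _, rfl⟩ <;> simp_all

lemma edge_snd_inl_mem {X Y : Finset Pt} {b : Pt} {e : Vtx × Vtx} (he : e ∈ edges X Y)
    (h : e.2 = Sum.inl b) : b ∈ Y := by
  rcases edge_cases he with ⟨c, _, d, hd, rfl⟩ | ⟨c, _, rfl⟩ | ⟨d, hd, rfl⟩ <;> simp_all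

lemma lqNorm_pos {q : ℝ} (hq : 1 ≤ q) {z : Pt} (hz : z ≠ 0) : 0 < lqNorm q z := by
  have h1 : 0 ≤ |z.2| ^ q := Real.rpow_nonneg (abs_nonneg _) q
  have h2 : 0 ≤ |z.1| ^ q := Real.rpow_nonneg (abs_nonneg _) q
  have hpos : 0 < |z.1| ^ q + |z.2| ^ q := by
    have : z.1 ≠ 0 ∨ z.2 ≠ 0 := by
      by_contra h
      push_neg at h
      exact hz (Prod.ext h.1 h.2)
    rcases this with h | h
    · have := Real.rpow_pos_of_pos (abs_pos.mpr h) q; linarith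
    · have := Real.rpow_pos_of_pos (abs_pos.mpr h) q; linarith
  exact Real.rpow_pos_of_pos hpos _

lemma edgeWeight_pos {p q : ℝ} (hq : 1 ≤ q) {u v : Vtx} (h : pos u ≠ pos v) :
    0 < edgeWeight p q u v :=
  Real.rpow_pos_of_pos (lqNorm_pos hq (sub_ne_zero.mpr h)) p

lemma one_le_sum_indicator {α : Type*} [DecidableEq α] {s t : Finset α} {e₁ : α}
    (h1 : e₁ ∈ s) (hx1 : e₁ ∈ t) : (1:ℝ) ≤ ∑ e ∈ s, (if e ∈ t then (1:ℝ) else 0) := by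
  calc (1:ℝ) = ∑ e ∈ ({e₁} : Finset α), (if e ∈ t then (1:ℝ) else 0) := by simp [hx1]
    _ ≤ _ := Finset.sum_le_sum_of_subset_of_nonneg (by simpa using h1)
        (fun i _ _ => by split <;> norm_num)

lemma two_le_sum_indicator {α : Type*} [DecidableEq α] {s t : Finset α} {e₁ e₂ : α}
    (h1 : e₁ ∈ s) (h2 : e₂ ∈ s) (hne : e₁ ≠ e₂) (hx1 : e₁ ∈ t) (hx2 : e₂ ∈ t) :
    (2:ℝ) ≤ ∑ e ∈ s, (if e ∈ t then (1:ℝ) else 0) := by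
  calc (2:ℝ) = ∑ e ∈ ({e₁, e₂} : Finset α), (if e ∈ t then (1:ℝ) else 0) := by
        rw [Finset.sum_pair hne, if_pos hx1, if_pos hx2]; norm_num
    _ ≤ _ := Finset.sum_le_sum_of_subset_of_nonneg
        (by intro z hz; simp only [Finset.mem_insert, Finset.mem_singleton] at hz
            rcases hz with rfl | rfl <;> assumption)
        (fun i _ _ => by split <;> norm_num)


lemma sum_delta_eq {s : Finset Pt} {w : Vtx} {f : Pt → ℝ} {b₀ : Pt} (hw : w = Sum.inl b₀)
    (hb : b₀ ∈ s) : ∑ b ∈ s, (if w = Sum.inl b then (1:ℝ) else 0) * f b = f b₀ := by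
  subst hw
  rw [Finset.sum_eq_single b₀]
  · simp
  · intro b _ hb'
    simp [Sum.inl.injEq, Ne.symm hb']
  · intro h; exact absurd hb h


/-- Assume genericity and `B > B* = max_{e ∈ E} ω(e)`.  If `x ⊆ E`
is not a matching of `G̃`, and `x̃` is obtained from `x` by removing a single edge
`(u,v) ∈ x` that shares a vertex with at least one other edge of `x`, then
`H(x̃) < H(x)`. -/
theorem remove_one_edge_decreases_H (B p q : ℝ) (hp : 1 ≤ p) (hq : 1 ≤ q)
    (X Y : Finset Pt) (hX : ∀ z ∈ X, z.1 < z.2) (hY : ∀ z ∈ Y, z.1 < z.2)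
    (hgen : ∀ a ∈ X, ∀ b ∈ Y, a ≠ b)
    (hB : ∀ e ∈ edges X Y, edgeWeight p q e.1 e.2 < B)
    (x : Finset (Vtx × Vtx)) (hxE : x ⊆ edges X Y) (hnm : ¬ IsMatching x)
    (u v : Vtx) (huv : (u, v) ∈ x)
    (hshare : ∃ e ∈ x, e ≠ (u, v) ∧ (e.1 = u ∨ e.2 = v)) :
    Ham B p q X Y (x.erase (u, v)) < Ham B p q X Y x := by
  classical
  set E := edges X Y with hE
  have huvE : (u, v) ∈ E := hxE huv
  -- positivity of the removed weight
  have hne : pos u ≠ pos v := by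
    rcases edge_cases huvE with ⟨a, ha, b, hb, hab⟩ | ⟨a, ha, hab⟩ | ⟨b, hb, hab⟩
    · injection hab with h1 h2; subst h1; subst h2
      simpa [pos] using hgen a ha b hb
    · injection hab with h1 h2; subst h1; subst h2
      have := hX a ha
      simp only [pos, diagProj]
      intro hcontra
      have := congrArg Prod.fst hcontra
      simp at this; linarith
    · injection hab with h1 h2; subst h1; subst h2
      have := hY b hb
      simp only [pos, diagProj]
      intro hcontra
      have := congrArg Prod.fst hcontra
      simp at this; linarith
  have hω : 0 < edgeWeight p q u v := edgeWeight_pos hq hne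
  have hBpos : 0 < B := lt_trans hω (hB (u, v) huvE)
  -- indicator identity
  have hind : ∀ e : Vtx × Vtx, (if e ∈ x.erase (u, v) then (1:ℝ) else 0)
      = (if e ∈ x then (1:ℝ) else 0) - (if e = (u, v) then 1 else 0) := by
    intro e
    by_cases h : e = (u, v)
    · subst h; simp [huv]
    · simp [Finset.mem_erase, h]
  -- Fc identity
  have hFc : Fc p q E (x.erase (u, v)) = Fc p q E x - edgeWeight p q u v := by
    unfold Fc
    simp only [hind, mul_sub]
    rw [Finset.sum_sub_distrib]
    congr 1
    rw [Finset.sum_eq_single (u, v)]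
    · simp
    · intro e _ hne'; simp [hne']
    · intro h; exact absurd huvE h
  -- degree functions
  set dU : Pt → ℝ := fun a =>
    ∑ e ∈ E.filter (fun e => e.1 = Sum.inl a), (if e ∈ x then (1:ℝ) else 0) with hdU
  set dV : Pt → ℝ := fun b =>
    ∑ e ∈ E.filter (fun e => e.2 = Sum.inl b), (if e ∈ x then (1:ℝ) else 0) with hdV
  set SU : ℝ := ∑ a ∈ X, (if u = Sum.inl a then (1:ℝ) else 0) * (3 - 2 * dU a) with hSU
  set SV : ℝ := ∑ b ∈ Y, (if v = Sum.inl b then (1:ℝ) else 0) * (3 - 2 * dV b) with hSV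
  -- FU identity
  have hFU : FU B X E (x.erase (u, v)) = FU B X E x + B * SU := by
    unfold FU
    rw [hSU, ← mul_add, ← Finset.sum_add_distrib]
    congr 1
    apply Finset.sum_congr rfl
    intro a _
    have hin : ∑ e ∈ E.filter (fun e => e.1 = Sum.inl a), (if e ∈ x.erase (u, v) then (1:ℝ) else 0)
        = dU a - (if u = Sum.inl a then 1 else 0) := by
      simp only [hind]
      rw [Finset.sum_sub_distrib, hdU]
      congr 1
      rw [Finset.sum_ite_eq' (E.filter (fun e => e.1 = Sum.inl a)) (u, v) (fun _ => (1:ℝ))]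
      simp [Finset.mem_filter, huvE]
    rw [hin]
    by_cases h : u = Sum.inl a
    · simp only [if_pos h]; ring
    · simp only [if_neg h]; ring
  -- FV identity
  have hFV : FV B Y E (x.erase (u, v)) = FV B Y E x + B * SV := by
    unfold FV
    rw [hSV, ← mul_add, ← Finset.sum_add_distrib]
    congr 1
    apply Finset.sum_congr rfl
    intro b _
    have hin : ∑ e ∈ E.filter (fun e => e.2 = Sum.inl b), (if e ∈ x.erase (u, v) then (1:ℝ) else 0)
        = dV b - (if v = Sum.inl b then 1 else 0) := by
      simp only [hind]
      rw [Finset.sum_sub_distrib, hdV]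
      congr 1
      rw [Finset.sum_ite_eq' (E.filter (fun e => e.2 = Sum.inl b)) (u, v) (fun _ => (1:ℝ))]
      simp [Finset.mem_filter, huvE]
    rw [hin]
    by_cases h : v = Sum.inl b
    · simp only [if_pos h]; ring
    · simp only [if_neg h]; ring
  -- bound on SV (always ≤ 1)
  have hSVle : SV ≤ 1 := by
    rcases hv : v with b₀ | b₀
    · have hb₀ : b₀ ∈ Y := edge_snd_inl_mem huvE (by rw [hv])
      have hdV1 : (1:ℝ) ≤ dV b₀ := by
        exact one_le_sum_indicator (Finset.mem_filter.mpr ⟨huvE, hv⟩) huv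
      have hSVeq : SV = 3 - 2 * dV b₀ := sum_delta_eq hv hb₀
      linarith
    · have : SV = 0 := by
        rw [hSV]
        apply Finset.sum_eq_zero
        intro b _
        simp [hv]
      linarith
  -- bound on SU (always ≤ 1)
  have hSUle : SU ≤ 1 := by
    rcases hu : u with a₀ | a₀
    · have ha₀ : a₀ ∈ X := edge_fst_inl_mem huvE (by rw [hu])
      have hdU1 : (1:ℝ) ≤ dU a₀ := by
        exact one_le_sum_indicator (Finset.mem_filter.mpr ⟨huvE, hu⟩) huv
      have hSUeq : SU = 3 - 2 * dU a₀ := sum_delta_eq hu ha₀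
      linarith
    · have : SU = 0 := by
        rw [hSU]
        apply Finset.sum_eq_zero
        intro a _
        simp [hu]
      linarith
  -- main bound: SU + SV ≤ 0
  have hkey : SU + SV ≤ 0 := by
    obtain ⟨e, hex, hene, hshare'⟩ := hshare
    have heE : e ∈ E := hxE hex
    rcases hshare' with h1 | h2
    · -- e shares first vertex: u = inl a₀ with degree ≥ 2
      obtain ⟨a₀, hu⟩ : ∃ a₀, u = Sum.inl a₀ := by
        rcases hu : u with a₀ | b₀
        · exact ⟨a₀, rfl⟩
        · exfalso
          have h3 := edge_fst_inr heE (h1.trans hu)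
          have h4 := edge_fst_inr huvE (by rw [hu])
          exact hene (h3.trans h4.symm)
      have ha₀ : a₀ ∈ X := edge_fst_inl_mem huvE (by rw [hu])
      have hdU2 : (2:ℝ) ≤ dU a₀ := by
        exact two_le_sum_indicator (Finset.mem_filter.mpr ⟨huvE, hu⟩)
          (Finset.mem_filter.mpr ⟨heE, h1.trans hu⟩) (Ne.symm hene) huv hex
      have hSUeq : SU = 3 - 2 * dU a₀ := sum_delta_eq hu ha₀
      linarith
    · -- e shares second vertex: v = inl b₀ with degree ≥ 2
      obtain ⟨b₀, hv⟩ : ∃ b₀, v = Sum.inl b₀ := by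
        rcases hv : v with b₀ | c₀
        · exact ⟨b₀, rfl⟩
        · exfalso
          have h3 := edge_snd_inr heE (h2.trans hv)
          have h4 := edge_snd_inr huvE (by rw [hv])
          exact hene (h3.trans h4.symm)
      have hb₀ : b₀ ∈ Y := edge_snd_inl_mem huvE (by rw [hv])
      have hdV2 : (2:ℝ) ≤ dV b₀ := by
        exact two_le_sum_indicator (Finset.mem_filter.mpr ⟨huvE, hv⟩)
          (Finset.mem_filter.mpr ⟨heE, h2.trans hv⟩) (Ne.symm hene) huv hex
      have hSVeq : SV = 3 - 2 * dV b₀ := sum_delta_eq hv hb₀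
      linarith
  -- conclude
  have : Ham B p q X Y (x.erase (u, v)) =
      Ham B p q X Y x - edgeWeight p q u v + B * (SU + SV) := by
    unfold Ham
    rw [← hE, hFc, hFU, hFV]; ring
  rw [this]
  nlinarith [mul_nonneg hBpos.le (neg_nonneg.mpr hkey)]
end

section
/- Assume B > B*. If y ⊆ E is a matching of G̃ and ỹ = y ∪ {(u,v)}, where (u,v) ∈ E \ y is an edge both of whose endpoints are adjacent to no edge of y, then H(ỹ) < H(y). -/
open Finset

private lemma edgeWeight_nonneg (p q : ℝ) (u v : Vtx) : 0 ≤ edgeWeight p q u v := by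
  unfold edgeWeight lqNorm
  positivity

private lemma Fc_eq (p q : ℝ) (E x : Finset (Vtx × Vtx)) (hx : x ⊆ E) :
    Fc p q E x = ∑ e ∈ x, edgeWeight p q e.1 e.2 := by
  unfold Fc
  simp only [mul_ite, mul_one, mul_zero]
  rw [← Finset.sum_filter, Finset.filter_mem_eq_inter, Finset.inter_eq_right.mpr hx]

private lemma sum_ind_left_zero (E y : Finset (Vtx × Vtx)) (u : Vtx)
    (hu : ∀ e ∈ y, e.1 ≠ u) :
    ∑ e ∈ E.filter (fun e => e.1 = u), (if e ∈ y then (1 : ℝ) else 0) = 0 := by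
  refine Finset.sum_eq_zero fun e he => ?_
  rw [Finset.mem_filter] at he
  rw [if_neg fun hey => hu e hey he.2]

private lemma sum_ind_right_zero (E y : Finset (Vtx × Vtx)) (v : Vtx)
    (hv : ∀ e ∈ y, e.2 ≠ v) :
    ∑ e ∈ E.filter (fun e => e.2 = v), (if e ∈ y then (1 : ℝ) else 0) = 0 := by
  refine Finset.sum_eq_zero fun e he => ?_
  rw [Finset.mem_filter] at he
  rw [if_neg fun hey => hv e hey he.2]

private lemma sum_ind_left_one (E y : Finset (Vtx × Vtx)) (u v : Vtx)
    (huvE : (u, v) ∈ E) (hu : ∀ e ∈ y, e.1 ≠ u) :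
    ∑ e ∈ E.filter (fun e => e.1 = u), (if e ∈ insert (u, v) y then (1 : ℝ) else 0) = 1 := by
  have h : ∀ e ∈ E.filter (fun e => e.1 = u),
      (if e ∈ insert (u, v) y then (1 : ℝ) else 0) = if e = (u, v) then 1 else 0 := by
    intro e he
    rw [Finset.mem_filter] at he
    by_cases h : e = (u, v)
    · simp [h]
    · rw [if_neg h, if_neg]
      simp only [Finset.mem_insert, not_or]
      exact ⟨h, fun hey => hu e hey he.2⟩
  rw [Finset.sum_congr rfl h, Finset.sum_ite_eq' (E.filter _) ((u, v)) (fun _ => (1 : ℝ))]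
  simp [Finset.mem_filter, huvE]

private lemma sum_ind_right_one (E y : Finset (Vtx × Vtx)) (u v : Vtx)
    (huvE : (u, v) ∈ E) (hv : ∀ e ∈ y, e.2 ≠ v) :
    ∑ e ∈ E.filter (fun e => e.2 = v), (if e ∈ insert (u, v) y then (1 : ℝ) else 0) = 1 := by
  have h : ∀ e ∈ E.filter (fun e => e.2 = v),
      (if e ∈ insert (u, v) y then (1 : ℝ) else 0) = if e = (u, v) then 1 else 0 := by
    intro e he
    rw [Finset.mem_filter] at he
    by_cases h : e = (u, v)
    · simp [h]
    · rw [if_neg h, if_neg]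
      simp only [Finset.mem_insert, not_or]
      exact ⟨h, fun hey => hv e hey he.2⟩
  rw [Finset.sum_congr rfl h, Finset.sum_ite_eq' (E.filter _) ((u, v)) (fun _ => (1 : ℝ))]
  simp [Finset.mem_filter, huvE]

private lemma sum_ind_left_same (E y : Finset (Vtx × Vtx)) (u v w : Vtx) (hw : w ≠ u) :
    ∑ e ∈ E.filter (fun e => e.1 = w), (if e ∈ insert (u, v) y then (1 : ℝ) else 0) =
      ∑ e ∈ E.filter (fun e => e.1 = w), (if e ∈ y then (1 : ℝ) else 0) := by
  refine Finset.sum_congr rfl fun e he => ?_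
  rw [Finset.mem_filter] at he
  have : e ≠ (u, v) := fun h => hw (by rw [← he.2, h])
  simp [Finset.mem_insert, this]

private lemma sum_ind_right_same (E y : Finset (Vtx × Vtx)) (u v w : Vtx) (hw : w ≠ v) :
    ∑ e ∈ E.filter (fun e => e.2 = w), (if e ∈ insert (u, v) y then (1 : ℝ) else 0) =
      ∑ e ∈ E.filter (fun e => e.2 = w), (if e ∈ y then (1 : ℝ) else 0) := by
  refine Finset.sum_congr rfl fun e he => ?_
  rw [Finset.mem_filter] at he
  have : e ≠ (u, v) := fun h => hw (by rw [← he.2, h])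
  simp [Finset.mem_insert, this]

private lemma FU_insert_eq (B : ℝ) (X : Finset Pt) (E y : Finset (Vtx × Vtx)) (u v : Vtx)
    (h : ∀ a ∈ X, Sum.inl a ≠ u) :
    FU B X E (insert (u, v) y) = FU B X E y := by
  unfold FU
  congr 1
  exact Finset.sum_congr rfl fun a ha => by rw [sum_ind_left_same E y u v _ (h a ha)]

private lemma FV_insert_eq (B : ℝ) (Y : Finset Pt) (E y : Finset (Vtx × Vtx)) (u v : Vtx)
    (h : ∀ b ∈ Y, Sum.inl b ≠ v) :
    FV B Y E (insert (u, v) y) = FV B Y E y := by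
  unfold FV
  congr 1
  exact Finset.sum_congr rfl fun b hb => by rw [sum_ind_right_same E y u v _ (h b hb)]

private lemma FU_insert_sub (B : ℝ) (X : Finset Pt) (E y : Finset (Vtx × Vtx))
    (a0 : Pt) (v : Vtx) (ha0 : a0 ∈ X) (hE : (Sum.inl a0, v) ∈ E)
    (hu : ∀ e ∈ y, e.1 ≠ Sum.inl a0) :
    FU B X E (insert (Sum.inl a0, v) y) = FU B X E y - B := by
  unfold FU
  rw [← Finset.sum_erase_add _ _ ha0, ← Finset.sum_erase_add _ _ ha0]
  have h1 : ∀ a ∈ X.erase a0,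
      (1 - ∑ e ∈ E.filter (fun e => e.1 = Sum.inl a),
        (if e ∈ insert (Sum.inl a0, v) y then (1 : ℝ) else 0)) ^ 2 =
      (1 - ∑ e ∈ E.filter (fun e => e.1 = Sum.inl a),
        (if e ∈ y then (1 : ℝ) else 0)) ^ 2 := by
    intro a ha
    have hne : (Sum.inl a : Vtx) ≠ Sum.inl a0 := by
      simp only [ne_eq, Sum.inl.injEq]
      exact (Finset.mem_erase.mp ha).1
    rw [sum_ind_left_same E y _ v _ hne]
  rw [Finset.sum_congr rfl h1, sum_ind_left_one E y _ v hE hu, sum_ind_left_zero E y _ hu]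
  ring

private lemma FV_insert_sub (B : ℝ) (Y : Finset Pt) (E y : Finset (Vtx × Vtx))
    (u : Vtx) (b0 : Pt) (hb0 : b0 ∈ Y) (hE : (u, Sum.inl b0) ∈ E)
    (hv : ∀ e ∈ y, e.2 ≠ Sum.inl b0) :
    FV B Y E (insert (u, Sum.inl b0) y) = FV B Y E y - B := by
  unfold FV
  rw [← Finset.sum_erase_add _ _ hb0, ← Finset.sum_erase_add _ _ hb0]
  have h1 : ∀ b ∈ Y.erase b0,
      (1 - ∑ e ∈ E.filter (fun e => e.2 = Sum.inl b),
        (if e ∈ insert (u, Sum.inl b0) y then (1 : ℝ) else 0)) ^ 2 =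
      (1 - ∑ e ∈ E.filter (fun e => e.2 = Sum.inl b),
        (if e ∈ y then (1 : ℝ) else 0)) ^ 2 := by
    intro b hb
    have hne : (Sum.inl b : Vtx) ≠ Sum.inl b0 := by
      simp only [ne_eq, Sum.inl.injEq]
      exact (Finset.mem_erase.mp hb).1
    rw [sum_ind_right_same E y u _ _ hne]
  rw [Finset.sum_congr rfl h1, sum_ind_right_one E y u _ hE hv, sum_ind_right_zero E y _ hv]
  ring

/-- Assume `B > B* = max_{e ∈ E} ω(e)`.  If `y ⊆ E` is a matching
of `G̃` and `ỹ = y ∪ {(u,v)}`, where `(u,v) ∈ E \ y` is an edge both of whose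
endpoints are adjacent to no edge of `y`, then `H(ỹ) < H(y)`. -/
theorem add_one_edge_decreases_H (B p q : ℝ) (hp : 1 ≤ p) (hq : 1 ≤ q)
    (X Y : Finset Pt) (hX : ∀ z ∈ X, z.1 < z.2) (hY : ∀ z ∈ Y, z.1 < z.2)
    (hB : ∀ e ∈ edges X Y, edgeWeight p q e.1 e.2 < B)
    (y : Finset (Vtx × Vtx)) (hyE : y ⊆ edges X Y) (hym : IsMatching y)
    (u v : Vtx) (huvE : (u, v) ∈ edges X Y) (huvy : (u, v) ∉ y)
    (hu : ∀ e ∈ y, e.1 ≠ u) (hv : ∀ e ∈ y, e.2 ≠ v) :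
    Ham B p q X Y (insert (u, v) y) < Ham B p q X Y y := by
  have hw := hB (u, v) huvE
  have hw0 : 0 ≤ edgeWeight p q u v := edgeWeight_nonneg p q u v
  have hB0 : 0 < B := lt_of_le_of_lt hw0 hw
  have hins : insert (u, v) y ⊆ edges X Y := Finset.insert_subset huvE hyE
  have hFc : Fc p q (edges X Y) (insert (u, v) y) =
      Fc p q (edges X Y) y + edgeWeight p q u v := by
    rw [Fc_eq _ _ _ _ hins, Fc_eq _ _ _ _ hyE, Finset.sum_insert huvy]
    ring
  have hmem := huvE
  simp only [edges, Finset.mem_union, Finset.mem_image, Finset.mem_product] at hmem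
  rcases hmem with (⟨ab, ⟨haX, hbY⟩, hab⟩ | ⟨a, haX, hab⟩) | ⟨b, hbY, hab⟩
  · -- (u, v) = (inl a, inl b)
    obtain ⟨hu1, hv1⟩ := Prod.mk.injEq .. ▸ hab
    subst hu1; subst hv1
    have hFU := FU_insert_sub B X (edges X Y) y ab.1 _ haX huvE hu
    have hFV := FV_insert_sub B Y (edges X Y) y _ ab.2 hbY huvE hv
    unfold Ham
    rw [hFc, hFU, hFV]
    linarith
  · obtain ⟨hu1, hv1⟩ := Prod.mk.injEq .. ▸ hab
    subst hu1; subst hv1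
    have hFU := FU_insert_sub B X (edges X Y) y a _ haX huvE hu
    have hFV := FV_insert_eq B Y (edges X Y) y (Sum.inl a) (Sum.inr a) (fun b _ => by simp)
    unfold Ham
    rw [hFc, hFU, hFV]
    linarith
  · obtain ⟨hu1, hv1⟩ := Prod.mk.injEq .. ▸ hab
    subst hu1; subst hv1
    have hFU := FU_insert_eq B X (edges X Y) y (Sum.inr b) (Sum.inl b) (fun a _ => by simp)
    have hFV := FV_insert_sub B Y (edges X Y) y _ b hbY huvE hv
    unfold Ham
    rw [hFc, hFU, hFV]
    linarith
end

section
/- Assume the genericity condition and B > B*. Then the minimum value of H over all subsets of E equals the minimum of C(z) over all maximal matchings z of G̃: min_{x ⊆ E} H(x) = min{C(z) : z a maximal matching of G̃}. -/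
open Finset

namespace MinHAux

open Finset

noncomputable def degL (x : Finset (Vtx × Vtx)) (u : Pt) : ℕ :=
  (x.filter (fun e => e.1 = Sum.inl u)).card

noncomputable def degR (x : Finset (Vtx × Vtx)) (v : Pt) : ℕ :=
  (x.filter (fun e => e.2 = Sum.inl v)).card

noncomputable def PL (X : Finset Pt) (x : Finset (Vtx × Vtx)) : ℝ :=
  ∑ u ∈ X, (1 - (degL x u : ℝ)) ^ 2

noncomputable def PR (Y : Finset Pt) (x : Finset (Vtx × Vtx)) : ℝ :=
  ∑ v ∈ Y, (1 - (degR x v : ℝ)) ^ 2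

lemma mem_edges_iff {X Y : Finset Pt} {e : Vtx × Vtx} :
    e ∈ edges X Y ↔ (∃ a ∈ X, ∃ b ∈ Y, e = (Sum.inl a, Sum.inl b)) ∨
      (∃ a ∈ X, e = (Sum.inl a, Sum.inr a)) ∨ (∃ b ∈ Y, e = (Sum.inr b, Sum.inl b)) := by
  simp only [edges, Finset.mem_union, Finset.mem_image, Finset.mem_product]
  constructor
  · rintro ((⟨⟨a, b⟩, ⟨ha, hb⟩, rfl⟩ | ⟨a, ha, rfl⟩) | ⟨b, hb, rfl⟩)
    · exact Or.inl ⟨a, ha, b, hb, rfl⟩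
    · exact Or.inr (Or.inl ⟨a, ha, rfl⟩)
    · exact Or.inr (Or.inr ⟨b, hb, rfl⟩)
  · rintro (⟨a, ha, b, hb, rfl⟩ | ⟨a, ha, rfl⟩ | ⟨b, hb, rfl⟩)
    · exact Or.inl (Or.inl ⟨⟨a, b⟩, ⟨ha, hb⟩, rfl⟩)
    · exact Or.inl (Or.inr ⟨a, ha, rfl⟩)
    · exact Or.inr ⟨b, hb, rfl⟩

lemma fst_inl_mem {X Y : Finset Pt} {e : Vtx × Vtx} (he : e ∈ edges X Y) {a : Pt}
    (h : e.1 = Sum.inl a) : a ∈ X := by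
  rcases mem_edges_iff.mp he with ⟨a', ha', b', hb', rfl⟩ | ⟨a', ha', rfl⟩ | ⟨b', hb', rfl⟩ <;>
    simp_all

lemma snd_inl_mem {X Y : Finset Pt} {e : Vtx × Vtx} (he : e ∈ edges X Y) {b : Pt}
    (h : e.2 = Sum.inl b) : b ∈ Y := by
  rcases mem_edges_iff.mp he with ⟨a', ha', b', hb', rfl⟩ | ⟨a', ha', rfl⟩ | ⟨b', hb', rfl⟩ <;>
    simp_all

lemma eq_of_fst_inr {X Y : Finset Pt} {e : Vtx × Vtx} (he : e ∈ edges X Y) {b : Pt}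
    (h : e.1 = Sum.inr b) : e = (Sum.inr b, Sum.inl b) := by
  rcases mem_edges_iff.mp he with ⟨a', ha', b', hb', rfl⟩ | ⟨a', ha', rfl⟩ | ⟨b', hb', rfl⟩ <;>
    simp_all

lemma eq_of_snd_inr {X Y : Finset Pt} {e : Vtx × Vtx} (he : e ∈ edges X Y) {a : Pt}
    (h : e.2 = Sum.inr a) : e = (Sum.inl a, Sum.inr a) := by
  rcases mem_edges_iff.mp he with ⟨a', ha', b', hb', rfl⟩ | ⟨a', ha', rfl⟩ | ⟨b', hb', rfl⟩ <;>
    simp_all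

lemma ham_eq {B p q : ℝ} {X Y : Finset Pt} {x : Finset (Vtx × Vtx)}
    (hx : x ⊆ edges X Y) :
    Ham B p q X Y x = cost p q x + B * PL X x + B * PR Y x := by
  classical
  have hFc : Fc p q (edges X Y) x = cost p q x := by
    unfold Fc cost
    rw [Finset.sum_congr rfl (fun e _ => by rw [mul_ite, mul_one, mul_zero]),
      Finset.sum_ite_mem, Finset.inter_eq_right.mpr hx]
  have hFU : FU B X (edges X Y) x = B * PL X x := by
    unfold FU PL
    congr 1
    refine Finset.sum_congr rfl fun u _ => ?_
    have : (∑ e ∈ (edges X Y).filter (fun e => e.1 = Sum.inl u),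
        (if e ∈ x then (1:ℝ) else 0)) = (degL x u : ℝ) := by
      rw [Finset.sum_boole]
      norm_cast
      unfold degL
      congr 1
      ext e
      simp only [Finset.mem_filter]
      exact ⟨fun h => ⟨h.2, h.1.2⟩, fun h => ⟨⟨hx h.1, h.2⟩, h.1⟩⟩
    rw [this]
  have hFV : FV B Y (edges X Y) x = B * PR Y x := by
    unfold FV PR
    congr 1
    refine Finset.sum_congr rfl fun v _ => ?_
    have : (∑ e ∈ (edges X Y).filter (fun e => e.2 = Sum.inl v),
        (if e ∈ x then (1:ℝ) else 0)) = (degR x v : ℝ) := by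
      rw [Finset.sum_boole]
      norm_cast
      unfold degR
      congr 1
      ext e
      simp only [Finset.mem_filter]
      exact ⟨fun h => ⟨h.2, h.1.2⟩, fun h => ⟨⟨hx h.1, h.2⟩, h.1⟩⟩
    rw [this]
  rw [Ham, hFc, hFU, hFV]


lemma degL_erase_of_ne {x : Finset (Vtx × Vtx)} {e : Vtx × Vtx} {u : Pt}
    (h : ¬ e.1 = Sum.inl u) : degL (x.erase e) u = degL x u := by
  unfold degL
  rw [Finset.filter_erase, Finset.erase_eq_of_notMem (by simp [h])]

lemma degR_erase_of_ne {x : Finset (Vtx × Vtx)} {e : Vtx × Vtx} {v : Pt}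
    (h : ¬ e.2 = Sum.inl v) : degR (x.erase e) v = degR x v := by
  unfold degR
  rw [Finset.filter_erase, Finset.erase_eq_of_notMem (by simp [h])]

lemma one_le_degL {x : Finset (Vtx × Vtx)} {e : Vtx × Vtx} {u : Pt}
    (he : e ∈ x) (h : e.1 = Sum.inl u) : 1 ≤ degL x u :=
  Finset.card_pos.mpr ⟨e, Finset.mem_filter.mpr ⟨he, h⟩⟩

lemma one_le_degR {x : Finset (Vtx × Vtx)} {e : Vtx × Vtx} {v : Pt}
    (he : e ∈ x) (h : e.2 = Sum.inl v) : 1 ≤ degR x v :=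
  Finset.card_pos.mpr ⟨e, Finset.mem_filter.mpr ⟨he, h⟩⟩

lemma degL_erase_cast {x : Finset (Vtx × Vtx)} {e : Vtx × Vtx} {u : Pt}
    (he : e ∈ x) (h : e.1 = Sum.inl u) :
    (degL (x.erase e) u : ℝ) = (degL x u : ℝ) - 1 := by
  unfold degL
  rw [Finset.filter_erase, Finset.card_erase_of_mem (Finset.mem_filter.mpr ⟨he, h⟩)]
  have h1 : 1 ≤ degL x u := one_le_degL he h
  unfold degL at h1
  push_cast [Nat.cast_sub h1]
  ring

lemma degR_erase_cast {x : Finset (Vtx × Vtx)} {e : Vtx × Vtx} {v : Pt}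
    (he : e ∈ x) (h : e.2 = Sum.inl v) :
    (degR (x.erase e) v : ℝ) = (degR x v : ℝ) - 1 := by
  unfold degR
  rw [Finset.filter_erase, Finset.card_erase_of_mem (Finset.mem_filter.mpr ⟨he, h⟩)]
  have h1 : 1 ≤ degR x v := one_le_degR he h
  unfold degR at h1
  push_cast [Nat.cast_sub h1]
  ring

lemma degL_insert_of_ne {x : Finset (Vtx × Vtx)} {e : Vtx × Vtx} {u : Pt}
    (h : ¬ e.1 = Sum.inl u) : degL (insert e x) u = degL x u := by
  unfold degL
  rw [Finset.filter_insert, if_neg h]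

lemma degR_insert_of_ne {x : Finset (Vtx × Vtx)} {e : Vtx × Vtx} {v : Pt}
    (h : ¬ e.2 = Sum.inl v) : degR (insert e x) v = degR x v := by
  unfold degR
  rw [Finset.filter_insert, if_neg h]

lemma degL_insert_self {x : Finset (Vtx × Vtx)} {e : Vtx × Vtx} {u : Pt}
    (he : e ∉ x) (h : e.1 = Sum.inl u) : degL (insert e x) u = degL x u + 1 := by
  unfold degL
  rw [Finset.filter_insert, if_pos h, Finset.card_insert_of_notMem (by simp [he])]

lemma degR_insert_self {x : Finset (Vtx × Vtx)} {e : Vtx × Vtx} {v : Pt}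
    (he : e ∉ x) (h : e.2 = Sum.inl v) : degR (insert e x) v = degR x v + 1 := by
  unfold degR
  rw [Finset.filter_insert, if_pos h, Finset.card_insert_of_notMem (by simp [he])]

lemma sum_sq_upd (S : Finset Pt) (f g : Pt → ℕ) (a : Pt) (ha : a ∈ S)
    (h : ∀ u ∈ S, u ≠ a → f u = g u) :
    (∑ u ∈ S, (1 - (f u : ℝ)) ^ 2) =
      (∑ u ∈ S, (1 - (g u : ℝ)) ^ 2) - (1 - (g a : ℝ)) ^ 2 + (1 - (f a : ℝ)) ^ 2 := by
  rw [← Finset.sum_erase_add S _ ha, ← Finset.sum_erase_add S (fun u => (1 - (g u : ℝ)) ^ 2) ha]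
  have hs : (∑ u ∈ S.erase a, (1 - (f u : ℝ)) ^ 2) =
      ∑ u ∈ S.erase a, (1 - (g u : ℝ)) ^ 2 := by
    refine Finset.sum_congr rfl fun u hu => ?_
    rw [h u (Finset.mem_of_mem_erase hu) (Finset.ne_of_mem_erase hu)]
  rw [hs]; ring

lemma lqNorm_pos {q : ℝ} (z : Pt) (hz : z ≠ 0) : 0 < lqNorm q z := by
  unfold lqNorm
  apply Real.rpow_pos_of_pos
  have : z.1 ≠ 0 ∨ z.2 ≠ 0 := by
    by_contra h
    push_neg at h
    exact hz (Prod.ext h.1 h.2)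
  rcases this with h | h
  · have h1 : (0:ℝ) < |z.1| ^ q := Real.rpow_pos_of_pos (abs_pos.mpr h) q
    have h2 : (0:ℝ) ≤ |z.2| ^ q := Real.rpow_nonneg (abs_nonneg _) q
    linarith
  · have h1 : (0:ℝ) < |z.2| ^ q := Real.rpow_pos_of_pos (abs_pos.mpr h) q
    have h2 : (0:ℝ) ≤ |z.1| ^ q := Real.rpow_nonneg (abs_nonneg _) q
    linarith

lemma weight_pos {p q : ℝ} {X Y : Finset Pt}
    (hX : ∀ z ∈ X, z.1 < z.2) (hY : ∀ z ∈ Y, z.1 < z.2)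
    (hgen : ∀ a ∈ X, ∀ b ∈ Y, a ≠ b) {e : Vtx × Vtx} (he : e ∈ edges X Y) :
    0 < edgeWeight p q e.1 e.2 := by
  unfold edgeWeight
  apply Real.rpow_pos_of_pos
  apply lqNorm_pos
  rw [sub_ne_zero]
  rcases mem_edges_iff.mp he with ⟨a, ha, b, hb, rfl⟩ | ⟨a, ha, rfl⟩ | ⟨b, hb, rfl⟩
  · simpa [pos] using hgen a ha b hb
  · have := hX a ha
    simp only [pos, diagProj, ne_eq, Prod.ext_iff]
    intro h
    rcases h with ⟨h1, _⟩
    linarith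
  · have := hY b hb
    simp only [pos, diagProj, ne_eq, Prod.ext_iff]
    intro h
    rcases h with ⟨h1, _⟩
    linarith


lemma cost_erase {p q : ℝ} {x : Finset (Vtx × Vtx)} {e : Vtx × Vtx} (he : e ∈ x) :
    cost p q (x.erase e) = cost p q x - edgeWeight p q e.1 e.2 := by
  unfold cost
  have := Finset.sum_erase_add x (fun e => edgeWeight p q e.1 e.2) he
  linarith

lemma cost_insert {p q : ℝ} {x : Finset (Vtx × Vtx)} {e : Vtx × Vtx} (he : e ∉ x) :
    cost p q (insert e x) = cost p q x + edgeWeight p q e.1 e.2 := by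
  unfold cost
  rw [Finset.sum_insert he]
  ring

lemma degL_le_one {x : Finset (Vtx × Vtx)} (h : IsMatching x) (u : Pt) : degL x u ≤ 1 := by
  refine Finset.card_le_one.mpr fun e he e' he' => ?_
  simp only [Finset.mem_filter] at he he'
  by_contra hne
  exact (h e he.1 e' he'.1 hne).1 (he.2.trans he'.2.symm)

lemma degR_le_one {x : Finset (Vtx × Vtx)} (h : IsMatching x) (v : Pt) : degR x v ≤ 1 := by
  refine Finset.card_le_one.mpr fun e he e' he' => ?_
  simp only [Finset.mem_filter] at he he'
  by_contra hne
  exact (h e he.1 e' he'.1 hne).2 (he.2.trans he'.2.symm)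

lemma ham_erase_lt {B p q : ℝ} {X Y : Finset Pt} {x : Finset (Vtx × Vtx)}
    (hX : ∀ z ∈ X, z.1 < z.2) (hY : ∀ z ∈ Y, z.1 < z.2)
    (hgen : ∀ a ∈ X, ∀ b ∈ Y, a ≠ b)
    (hB : ∀ e ∈ edges X Y, edgeWeight p q e.1 e.2 < B)
    (hx : x ⊆ edges X Y) {e : Vtx × Vtx} (he : e ∈ x)
    (hdeg : (∃ a ∈ X, e.1 = Sum.inl a ∧ 2 ≤ degL x a) ∨
      (∃ b ∈ Y, e.2 = Sum.inl b ∧ 2 ≤ degR x b)) :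
    Ham B p q X Y (x.erase e) < Ham B p q X Y x := by
  classical
  have heE : e ∈ edges X Y := hx he
  have hωe : 0 < edgeWeight p q e.1 e.2 := weight_pos hX hY hgen heE
  have hBe : edgeWeight p q e.1 e.2 < B := hB e heE
  have hB0 : (0:ℝ) < B := lt_trans hωe hBe
  have hy : x.erase e ⊆ edges X Y := (Finset.erase_subset e x).trans hx
  rw [ham_eq hy, ham_eq hx, cost_erase he]
  rcases mem_edges_iff.mp heE with ⟨a, ha, b, hb, rfl⟩ | ⟨a, ha, rfl⟩ | ⟨b, hb, rfl⟩
  · -- e = (inl a, inl b)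
    have hdL1 : 1 ≤ degL x a := one_le_degL he rfl
    have hdR1 : 1 ≤ degR x b := one_le_degR he rfl
    have hPL : PL X (x.erase (Sum.inl a, Sum.inl b)) =
        PL X x - (1 - (degL x a : ℝ)) ^ 2 + (1 - ((degL x a : ℝ) - 1)) ^ 2 := by
      unfold PL
      rw [sum_sq_upd X _ (degL x) a ha (fun u hu hne =>
        degL_erase_of_ne (by simp only [Sum.inl.injEq]; exact fun h2 => hne h2.symm)),
        degL_erase_cast he rfl]
    have hPR : PR Y (x.erase (Sum.inl a, Sum.inl b)) =
        PR Y x - (1 - (degR x b : ℝ)) ^ 2 + (1 - ((degR x b : ℝ) - 1)) ^ 2 := by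
      unfold PR
      rw [sum_sq_upd Y _ (degR x) b hb (fun v hv hne =>
        degR_erase_of_ne (by simp only [Sum.inl.injEq]; exact fun h2 => hne h2.symm)),
        degR_erase_cast he rfl]
    rw [hPL, hPR]
    have hsum : (3:ℝ) ≤ (degL x a : ℝ) + (degR x b : ℝ) := by
      have : 3 ≤ degL x a + degR x b := by
        rcases hdeg with ⟨a', ha', h1, h2⟩ | ⟨b', hb', h1, h2⟩
        · obtain rfl : a = a' := by simpa using h1
          omega
        · obtain rfl : b = b' := by simpa using h1
          omega
      exact_mod_cast this
    nlinarith [mul_nonneg hB0.le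
      (by linarith : (0:ℝ) ≤ (degL x a : ℝ) + (degR x b : ℝ) - 3), hωe]
  · -- e = (inl a, inr a)
    have hdL2 : 2 ≤ degL x a := by
      rcases hdeg with ⟨a', ha', h1, h2⟩ | ⟨b', hb', h1, h2⟩
      · obtain rfl : a = a' := by simpa using h1
        omega
      · simp at h1
    have hPL : PL X (x.erase (Sum.inl a, Sum.inr a)) =
        PL X x - (1 - (degL x a : ℝ)) ^ 2 + (1 - ((degL x a : ℝ) - 1)) ^ 2 := by
      unfold PL
      rw [sum_sq_upd X _ (degL x) a ha (fun u hu hne =>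
        degL_erase_of_ne (by simp only [Sum.inl.injEq]; exact fun h2 => hne h2.symm)),
        degL_erase_cast he rfl]
    have hPR : PR Y (x.erase (Sum.inl a, Sum.inr a)) = PR Y x := by
      unfold PR
      refine Finset.sum_congr rfl fun v hv => ?_
      rw [degR_erase_of_ne (by simp)]
    rw [hPL, hPR]
    have hdL2' : (2:ℝ) ≤ (degL x a : ℝ) := by exact_mod_cast hdL2
    nlinarith [mul_nonneg hB0.le (by linarith : (0:ℝ) ≤ (degL x a : ℝ) - 2), hωe, hB0]
  · -- e = (inr b, inl b)
    have hdR2 : 2 ≤ degR x b := by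
      rcases hdeg with ⟨a', ha', h1, h2⟩ | ⟨b', hb', h1, h2⟩
      · simp at h1
      · obtain rfl : b = b' := by simpa using h1
        omega
    have hPR : PR Y (x.erase (Sum.inr b, Sum.inl b)) =
        PR Y x - (1 - (degR x b : ℝ)) ^ 2 + (1 - ((degR x b : ℝ) - 1)) ^ 2 := by
      unfold PR
      rw [sum_sq_upd Y _ (degR x) b hb (fun v hv hne =>
        degR_erase_of_ne (by simp only [Sum.inl.injEq]; exact fun h2 => hne h2.symm)),
        degR_erase_cast he rfl]
    have hPL : PL X (x.erase (Sum.inr b, Sum.inl b)) = PL X x := by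
      unfold PL
      refine Finset.sum_congr rfl fun u hu => ?_
      rw [degL_erase_of_ne (by simp)]
    rw [hPL, hPR]
    have hdR2' : (2:ℝ) ≤ (degR x b : ℝ) := by exact_mod_cast hdR2
    nlinarith [mul_nonneg hB0.le (by linarith : (0:ℝ) ≤ (degR x b : ℝ) - 2), hωe, hB0]


lemma ham_insert_X_lt {B p q : ℝ} {X Y : Finset Pt} {x : Finset (Vtx × Vtx)}
    (hB : ∀ e ∈ edges X Y, edgeWeight p q e.1 e.2 < B)
    (hx : x ⊆ edges X Y) {a : Pt} (ha : a ∈ X) (hd : degL x a = 0) :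
    Ham B p q X Y (insert ((Sum.inl a, Sum.inr a) : Vtx × Vtx) x) < Ham B p q X Y x := by
  classical
  set e : Vtx × Vtx := (Sum.inl a, Sum.inr a) with hedef
  have heE : e ∈ edges X Y := mem_edges_iff.mpr (Or.inr (Or.inl ⟨a, ha, rfl⟩))
  have henx : e ∉ x := fun h => by
    have := one_le_degL h (show e.1 = Sum.inl a from rfl)
    omega
  have hy : insert e x ⊆ edges X Y := Finset.insert_subset heE hx
  rw [ham_eq hy, ham_eq hx, cost_insert henx]
  have hPL : PL X (insert e x) = PL X x - (1 - (degL x a : ℝ)) ^ 2 +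
      (1 - (degL (insert e x) a : ℝ)) ^ 2 := by
    unfold PL
    rw [sum_sq_upd X _ (degL x) a ha (fun u hu hne =>
      degL_insert_of_ne (by simp only [hedef, Sum.inl.injEq]; exact fun h2 => hne h2.symm))]
  have hd1 : (degL (insert e x) a : ℝ) = 1 := by
    rw [degL_insert_self henx rfl, hd]
    norm_num
  have hd0 : (degL x a : ℝ) = 0 := by rw [hd]; norm_num
  have hPR : PR Y (insert e x) = PR Y x := by
    unfold PR
    refine Finset.sum_congr rfl fun v hv => ?_
    rw [degR_insert_of_ne (by simp [hedef])]
  rw [hPL, hPR, hd1, hd0]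
  have := hB e heE
  nlinarith [this]

lemma ham_insert_Y_lt {B p q : ℝ} {X Y : Finset Pt} {x : Finset (Vtx × Vtx)}
    (hB : ∀ e ∈ edges X Y, edgeWeight p q e.1 e.2 < B)
    (hx : x ⊆ edges X Y) {b : Pt} (hb : b ∈ Y) (hd : degR x b = 0) :
    Ham B p q X Y (insert ((Sum.inr b, Sum.inl b) : Vtx × Vtx) x) < Ham B p q X Y x := by
  classical
  set e : Vtx × Vtx := (Sum.inr b, Sum.inl b) with hedef
  have heE : e ∈ edges X Y := mem_edges_iff.mpr (Or.inr (Or.inr ⟨b, hb, rfl⟩))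
  have henx : e ∉ x := fun h => by
    have := one_le_degR h (show e.2 = Sum.inl b from rfl)
    omega
  have hy : insert e x ⊆ edges X Y := Finset.insert_subset heE hx
  rw [ham_eq hy, ham_eq hx, cost_insert henx]
  have hPR : PR Y (insert e x) = PR Y x - (1 - (degR x b : ℝ)) ^ 2 +
      (1 - (degR (insert e x) b : ℝ)) ^ 2 := by
    unfold PR
    rw [sum_sq_upd Y _ (degR x) b hb (fun v hv hne =>
      degR_insert_of_ne (by simp only [hedef, Sum.inl.injEq]; exact fun h2 => hne h2.symm))]
  have hd1 : (degR (insert e x) b : ℝ) = 1 := by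
    rw [degR_insert_self henx rfl, hd]
    norm_num
  have hd0 : (degR x b : ℝ) = 0 := by rw [hd]; norm_num
  have hPL : PL X (insert e x) = PL X x := by
    unfold PL
    refine Finset.sum_congr rfl fun u hu => ?_
    rw [degL_insert_of_ne (by simp [hedef])]
  rw [hPL, hPR, hd1, hd0]
  have := hB e heE
  nlinarith [this]


lemma PL_eq_zero {X : Finset Pt} {z : Finset (Vtx × Vtx)} (hm : IsMatching z)
    (hcov : ∀ a ∈ X, 1 ≤ degL z a) : PL X z = 0 := by
  unfold PL
  apply Finset.sum_eq_zero
  intro a ha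
  have h1 := degL_le_one hm a
  have h2 := hcov a ha
  have : degL z a = 1 := by omega
  rw [this]
  norm_num

lemma PR_eq_zero {Y : Finset Pt} {z : Finset (Vtx × Vtx)} (hm : IsMatching z)
    (hcov : ∀ b ∈ Y, 1 ≤ degR z b) : PR Y z = 0 := by
  unfold PR
  apply Finset.sum_eq_zero
  intro b hb
  have h1 := degR_le_one hm b
  have h2 := hcov b hb
  have : degR z b = 1 := by omega
  rw [this]
  norm_num

lemma maximal_covers {X Y : Finset Pt} {z : Finset (Vtx × Vtx)}
    (hz : IsMaximalMatching (edges X Y) z) :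
    (∀ a ∈ X, 1 ≤ degL z a) ∧ (∀ b ∈ Y, 1 ≤ degR z b) := by
  obtain ⟨hzE, hzm, hmax⟩ := hz
  constructor
  · intro a ha
    by_contra hcon
    have hd : ∀ f ∈ z, f.1 ≠ Sum.inl a := by
      intro f hf h
      exact hcon (one_le_degL hf h)
    set e : Vtx × Vtx := (Sum.inl a, Sum.inr a) with hedef
    have heE : e ∈ edges X Y := mem_edges_iff.mpr (Or.inr (Or.inl ⟨a, ha, rfl⟩))
    have henz : e ∉ z := fun h => hd e h rfl
    have hym : IsMatching (insert e z) := by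
      intro f hf f' hf' hne
      rcases Finset.mem_insert.mp hf with rfl | hf2 <;>
        rcases Finset.mem_insert.mp hf' with rfl | hf'2
      · exact absurd rfl hne
      · refine ⟨fun h => hd f' hf'2 h.symm, fun h => ?_⟩
        have : f' = e := eq_of_snd_inr (hzE hf'2) h.symm
        exact henz (this ▸ hf'2)
      · refine ⟨fun h => hd f hf2 h, fun h => ?_⟩
        have : f = e := eq_of_snd_inr (hzE hf2) h
        exact henz (this ▸ hf2)
      · exact hzm f hf2 f' hf'2 hne
    have heq := hmax _ (Finset.insert_subset heE hzE) hym (Finset.subset_insert e z)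
    exact henz (by rw [heq]; exact Finset.mem_insert_self e z)
  · intro b hb
    by_contra hcon
    have hd : ∀ f ∈ z, f.2 ≠ Sum.inl b := by
      intro f hf h
      exact hcon (one_le_degR hf h)
    set e : Vtx × Vtx := (Sum.inr b, Sum.inl b) with hedef
    have heE : e ∈ edges X Y := mem_edges_iff.mpr (Or.inr (Or.inr ⟨b, hb, rfl⟩))
    have henz : e ∉ z := fun h => hd e h rfl
    have hym : IsMatching (insert e z) := by
      intro f hf f' hf' hne
      rcases Finset.mem_insert.mp hf with rfl | hf2 <;>
        rcases Finset.mem_insert.mp hf' with rfl | hf'2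
      · exact absurd rfl hne
      · refine ⟨fun h => ?_, fun h => hd f' hf'2 h.symm⟩
        have : f' = e := eq_of_fst_inr (hzE hf'2) h.symm
        exact henz (this ▸ hf'2)
      · refine ⟨fun h => ?_, fun h => hd f hf2 h⟩
        have : f = e := eq_of_fst_inr (hzE hf2) h
        exact henz (this ▸ hf2)
      · exact hzm f hf2 f' hf'2 hne
    have heq := hmax _ (Finset.insert_subset heE hzE) hym (Finset.subset_insert e z)
    exact henz (by rw [heq]; exact Finset.mem_insert_self e z)

lemma maximal_of_covers {X Y : Finset Pt} {z : Finset (Vtx × Vtx)}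
    (hzE : z ⊆ edges X Y) (hm : IsMatching z)
    (hcX : ∀ a ∈ X, 1 ≤ degL z a) (hcY : ∀ b ∈ Y, 1 ≤ degR z b) :
    IsMaximalMatching (edges X Y) z := by
  refine ⟨hzE, hm, fun y hyE hym hzy => Finset.Subset.antisymm hzy fun f hf => ?_⟩
  by_contra hfz
  have hL : ∀ a : Pt, a ∈ X → f.1 = Sum.inl a → False := by
    intro a ha hfa
    obtain ⟨e', he'⟩ := Finset.card_pos.mp (hcX a ha)
    rw [Finset.mem_filter] at he'
    have hne : f ≠ e' := fun h => hfz (h ▸ he'.1)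
    exact (hym f hf e' (hzy he'.1) hne).1 (by rw [he'.2, hfa])
  rcases mem_edges_iff.mp (hyE hf) with ⟨a, ha, b, hb, rfl⟩ | ⟨a, ha, rfl⟩ | ⟨b, hb, rfl⟩
  · exact hL a ha rfl
  · exact hL a ha rfl
  · obtain ⟨e', he'⟩ := Finset.card_pos.mp (hcY b hb)
    rw [Finset.mem_filter] at he'
    have hne : (⟨Sum.inr b, Sum.inl b⟩ : Vtx × Vtx) ≠ e' := fun h => hfz (h ▸ he'.1)
    exact (hym _ hf e' (hzy he'.1) hne).2 (by rw [he'.2])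

end MinHAux

/-- Assume genericity and `B > B* = max_{e ∈ E} ω(e)`.  Then the
minimum value of `H` over all subsets of `E` equals the minimum of `C(z)` over all
maximal matchings `z` of `G̃`. -/
theorem min_H_eq_min_cost (B p q : ℝ) (hp : 1 ≤ p) (hq : 1 ≤ q)
    (X Y : Finset Pt) (hX : ∀ z ∈ X, z.1 < z.2) (hY : ∀ z ∈ Y, z.1 < z.2)
    (hgen : ∀ a ∈ X, ∀ b ∈ Y, a ≠ b)
    (hB : ∀ e ∈ edges X Y, edgeWeight p q e.1 e.2 < B) :
    ∃ m : ℝ,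
      IsLeast {r : ℝ | ∃ x : Finset (Vtx × Vtx), x ⊆ edges X Y ∧ Ham B p q X Y x = r} m ∧
      IsLeast {r : ℝ | ∃ z : Finset (Vtx × Vtx),
        IsMaximalMatching (edges X Y) z ∧ cost p q z = r} m := by
  classical
  open MinHAux in
  obtain ⟨x₀, hx₀mem, hx₀min⟩ := Finset.exists_min_image (edges X Y).powerset
    (Ham B p q X Y) ⟨∅, Finset.empty_mem_powerset _⟩
  have hx₀E : x₀ ⊆ edges X Y := Finset.mem_powerset.mp hx₀mem
  have hmin : ∀ x : Finset (Vtx × Vtx), x ⊆ edges X Y →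
      Ham B p q X Y x₀ ≤ Ham B p q X Y x :=
    fun x hx => hx₀min x (Finset.mem_powerset.mpr hx)
  have hmatch : IsMatching x₀ := by
    by_contra hcon
    unfold IsMatching at hcon
    push_neg at hcon
    obtain ⟨e, he, e', he', hne, himp⟩ := hcon
    have hcontr : ∀ y : Finset (Vtx × Vtx), y ⊆ edges X Y →
        Ham B p q X Y y < Ham B p q X Y x₀ → False :=
      fun y hy hlt => absurd (hmin y hy) (not_le.mpr hlt)
    by_cases h1 : e.1 = e'.1
    · cases hfst : e.1 with
      | inl a =>
        have ha : a ∈ X := MinHAux.fst_inl_mem (hx₀E he) hfst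
        have hdeg2 : 2 ≤ MinHAux.degL x₀ a := by
          refine Finset.one_lt_card.mpr ⟨e, Finset.mem_filter.mpr ⟨he, hfst⟩,
            e', Finset.mem_filter.mpr ⟨he', by rw [← h1, hfst]⟩, hne⟩
        exact hcontr _ ((Finset.erase_subset _ _).trans hx₀E)
          (MinHAux.ham_erase_lt hX hY hgen hB hx₀E he (Or.inl ⟨a, ha, hfst, hdeg2⟩))
      | inr b =>
        have h2 : e = (Sum.inr b, Sum.inl b) := MinHAux.eq_of_fst_inr (hx₀E he) hfst
        have h3 : e' = (Sum.inr b, Sum.inl b) :=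
          MinHAux.eq_of_fst_inr (hx₀E he') (by rw [← h1, hfst])
        exact hne (h2.trans h3.symm)
    · have h2 : e.2 = e'.2 := himp h1
      cases hsnd : e.2 with
      | inl b =>
        have hb : b ∈ Y := MinHAux.snd_inl_mem (hx₀E he) hsnd
        have hdeg2 : 2 ≤ MinHAux.degR x₀ b := by
          refine Finset.one_lt_card.mpr ⟨e, Finset.mem_filter.mpr ⟨he, hsnd⟩,
            e', Finset.mem_filter.mpr ⟨he', by rw [← h2, hsnd]⟩, hne⟩
        exact hcontr _ ((Finset.erase_subset _ _).trans hx₀E)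
          (MinHAux.ham_erase_lt hX hY hgen hB hx₀E he (Or.inr ⟨b, hb, hsnd, hdeg2⟩))
      | inr a =>
        have h3 : e = (Sum.inl a, Sum.inr a) := MinHAux.eq_of_snd_inr (hx₀E he) hsnd
        have h4 : e' = (Sum.inl a, Sum.inr a) :=
          MinHAux.eq_of_snd_inr (hx₀E he') (by rw [← h2, hsnd])
        exact hne (h3.trans h4.symm)
  have hcovX : ∀ a ∈ X, 1 ≤ MinHAux.degL x₀ a := by
    intro a ha
    by_contra hc
    have hd : MinHAux.degL x₀ a = 0 := by omega
    have hsub : insert ((Sum.inl a, Sum.inr a) : Vtx × Vtx) x₀ ⊆ edges X Y :=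
      Finset.insert_subset
        (MinHAux.mem_edges_iff.mpr (Or.inr (Or.inl ⟨a, ha, rfl⟩))) hx₀E
    exact absurd (hmin _ hsub) (not_le.mpr (MinHAux.ham_insert_X_lt hB hx₀E ha hd))
  have hcovY : ∀ b ∈ Y, 1 ≤ MinHAux.degR x₀ b := by
    intro b hb
    by_contra hc
    have hd : MinHAux.degR x₀ b = 0 := by omega
    have hsub : insert ((Sum.inr b, Sum.inl b) : Vtx × Vtx) x₀ ⊆ edges X Y :=
      Finset.insert_subset
        (MinHAux.mem_edges_iff.mpr (Or.inr (Or.inr ⟨b, hb, rfl⟩))) hx₀E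
    exact absurd (hmin _ hsub) (not_le.mpr (MinHAux.ham_insert_Y_lt hB hx₀E hb hd))
  have hmaximal := MinHAux.maximal_of_covers hx₀E hmatch hcovX hcovY
  have hham0 : Ham B p q X Y x₀ = cost p q x₀ := by
    rw [MinHAux.ham_eq hx₀E, MinHAux.PL_eq_zero hmatch hcovX,
      MinHAux.PR_eq_zero hmatch hcovY]
    ring
  refine ⟨Ham B p q X Y x₀, ⟨⟨x₀, hx₀E, rfl⟩, ?_⟩, ⟨⟨x₀, hmaximal, hham0.symm⟩, ?_⟩⟩
  · rintro r ⟨x, hx, rfl⟩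
    exact hmin x hx
  · rintro r ⟨z, hz, rfl⟩
    obtain ⟨hzcX, hzcY⟩ := MinHAux.maximal_covers hz
    have hzc : Ham B p q X Y z = cost p q z := by
      rw [MinHAux.ham_eq hz.1, MinHAux.PL_eq_zero hz.2.1 hzcX,
        MinHAux.PR_eq_zero hz.2.1 hzcY]
      ring
    rw [← hzc]
    exact hmin z hz.1
end
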